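/- arXiv:math/0210024 — 2 statements merged into one kernel-verified Lean document; each statement's English description precedes it below -/
import Mathlib

section
/- Let α be a partial action of a monoid M on a set X with globalization Y = (M × X)/≃, where ≃ is generated by (uv, x) ∼ (u, v·x) whenever v·x is defined. If (u, x) ≃ (e, y), then u·x is defined in X and u·x = y. Consequently, the M-action on Y defined by v·[u,x] = [vu,x] restricts along i(x) = [e,x] to the original partial action on X. -/
/-!
The partial value `u·x ∈ Option X` is constant along each generating step
`(u v, x) ∼ (u, v·x)` by the strong associativity law, hence constant on the classes of the
generated equivalence; at a point `(e, y)` it is `some y`.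
-/

/-- The generating relation `(u*v, x) ∼ (u, v·x)` (whenever `v·x` is defined)
on `M × X`, whose generated equivalence defines the globalization. -/
def Sim {M X : Type*} [Monoid M] (α : M → X → Option X) :
    M × X → M × X → Prop := fun p q =>
  ∃ u v : M, p.1 = u * v ∧ q.1 = u ∧ α v p.2 = some q.2

section PartialAction

variable {M X : Type*} [Monoid M] {α : M → X → Option X}

theorem Sim.apply_eq (hmul : ∀ (u v : M) (x y : X), α v x = some y → α (u * v) x = α u y)
    {p q : M × X} (h : Sim α p q) : α p.1 p.2 = α q.1 q.2 := by
  obtain ⟨u, v, hp, hq, hv⟩ := h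
  rw [hp, hq, hmul u v p.2 q.2 hv]

theorem apply_eq_of_eqvGen_sim
    (hmul : ∀ (u v : M) (x y : X), α v x = some y → α (u * v) x = α u y)
    {p q : M × X} (h : Relation.EqvGen (Sim α) p q) : α p.1 p.2 = α q.1 q.2 :=
  Setoid.eqvGen_le (s := Setoid.ker fun p : M × X => α p.1 p.2)
    (fun _ _ hpq => Sim.apply_eq hmul hpq) h

theorem sim_one_of_apply_eq_some {u : M} {x y : X} (h : α u x = some y) :
    Sim α (u, x) (1, y) :=
  ⟨1, u, (one_mul u).symm, rfl, h⟩

end PartialAction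

/-- If `(u, x) ≃ (e, y)` in the globalization of a partial monoid action, then
`u·x` is defined and equal to `y`; consequently the total action
`v·[u,x] = [vu,x]` on `Y` restricts along `i(x) = [e,x]` exactly to the original
partial action (the `iff` in the second conjunct). -/
theorem stmt_4 {M X : Type*} [Monoid M] (α : M → X → Option X)
    (hunit : ∀ x, α 1 x = some x)
    (hmul : ∀ (u v : M) (x y : X), α v x = some y → α (u * v) x = α u y) :
    (∀ (u : M) (x y : X), Relation.EqvGen (Sim α) (u, x) (1, y) → α u x = some y) ∧
    (∀ (u : M) (x y : X), α u x = some y ↔ Relation.EqvGen (Sim α) (u, x) (1, y)) := by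
  have apply_eq_some : ∀ (u : M) (x y : X),
      Relation.EqvGen (Sim α) (u, x) (1, y) → α u x = some y := fun _ _ y h =>
    (apply_eq_of_eqvGen_sim hmul h).trans (hunit y)
  exact ⟨apply_eq_some, fun u x y =>
    ⟨fun h => .rel _ _ (sim_one_of_apply_eq_some h), apply_eq_some u x y⟩⟩
end

section
/- Let α be a confluent continuous partial action of a monoid M on a T1 topological space X, with topological globalization Y. Then Y is T1 if and only if u⁻¹[{x}] is closed in X for every u ∈ M and every x ∈ X. -/
/-- One-step reduction on words over `G` induced by the rules `R` of a monoid
presentation `⟨G|R⟩`. -/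
def MStep {G : Type*} (R : List G → List G → Prop) : List G → List G → Prop :=
  fun w₁ w₂ => ∃ a l r b : List G, R l r ∧ w₁ = a ++ l ++ b ∧ w₂ = a ++ r ++ b

/-- One-step reduction on `G* × X` for a confluent partial action: either
rewrite the word via `R`, or let the last (rightmost, acting first) generator
act on the point. -/
def PStep {G X : Type*} (R : List G → List G → Prop) (act : G → X → Option X) :
    List G × X → List G × X → Prop := fun p q =>
  (MStep R p.1 q.1 ∧ p.2 = q.2) ∨
  (∃ (w : List G) (g : G) (y : X),
    p.1 = w ++ [g] ∧ act g p.2 = some y ∧ q.1 = w ∧ q.2 = y)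

/-- The globalization `Y` of a confluent partial action: the quotient of
`G* × X` by the equivalence generated by the one-step reduction `PStep`. -/
def PGlob {G X : Type*} (R : List G → List G → Prop) (act : G → X → Option X) : Type _ :=
  Quot (Relation.EqvGen (PStep R act))

/-- The class of `(w, x)` in the globalization. -/
def PGlob.mk {G X : Type*} (R : List G → List G → Prop) (act : G → X → Option X)
    (p : List G × X) : PGlob R act :=
  Quot.mk _ p

/-- The topological globalization: the final topology with respect to all the
maps `x ↦ [w, x]`, `w` a word over `G`. -/
instance {G X : Type*} (R : List G → List G → Prop) (act : G → X → Option X)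
    [t : TopologicalSpace X] : TopologicalSpace (PGlob R act) :=
  ⨆ w : List G, TopologicalSpace.coinduced (fun x : X => PGlob.mk R act (w, x)) t

/-!
Closedness in `Y` is tested along the maps `x' ↦ [w, x']`, and `[w, x'] = [u, x']` for the normal
form `u` of the word `w`. Every point of `Y` has a unique normal form `[v, x]`. By standardization
(a reduction may do all word rewriting before letting letters act), `[u, x']` reduces to `[v, x]`
iff `u = v ++ p` and `(p, x')` reduces to `([], x)`; so the preimage of `{[v, x]}` is either
`p⁻¹[{x}]` or empty. Conversely `u⁻¹[{x}]` is the preimage of the point `[[], x]`.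
-/

open Relation

def IsNormalForm {α : Type*} (r : α → α → Prop) (a : α) : Prop :=
  ∀ b, ¬ r a b

theorem IsNormalForm.eq_of_reflTransGen {α : Type*} {r : α → α → Prop} {a b : α}
    (ha : IsNormalForm r a) (h : ReflTransGen r a b) : b = a := by
  induction h using ReflTransGen.head_induction_on with
  | refl => rfl
  | head hstep _ _ => exact absurd hstep (ha _)

theorem WellFounded.exists_isNormalForm {α : Type*} {r : α → α → Prop}
    (hwf : WellFounded (flip r)) (a : α) : ∃ b, ReflTransGen r a b ∧ IsNormalForm r b := by
  induction a using hwf.induction with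
  | _ a ih =>
    by_cases h : ∃ b, r a b
    · obtain ⟨b, hab⟩ := h
      obtain ⟨c, hbc, hc⟩ := ih b hab
      exact ⟨c, .head hab hbc, hc⟩
    · exact ⟨a, .refl, fun b hb => h ⟨b, hb⟩⟩

theorem join_reflTransGen_iff_eqvGen {α : Type*} {r : α → α → Prop}
    (hconf : ∀ a b c, ReflTransGen r a b → ReflTransGen r a c → Join (ReflTransGen r) b c)
    {a b : α} : Join (ReflTransGen r) a b ↔ EqvGen r a b := by
  refine ⟨fun h => join_le_of_equivalence_of_le (EqvGen.is_equivalence r)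
    (EqvGen.reflTransGen_le_eqvGen r) a b h, fun h => ?_⟩
  exact (equivalence_join hconf).eqvGen_iff.1
    (EqvGen.mono (fun a b hab => ⟨b, .single hab, .refl⟩) a b h)

section Rewriting

variable {G X : Type*} {R : List G → List G → Prop} {act : G → X → Option X}

theorem MStep.append_right {w₁ w₂ : List G} (h : MStep R w₁ w₂) (s : List G) :
    MStep R (w₁ ++ s) (w₂ ++ s) := by
  obtain ⟨a, l, r, b, hR, rfl, rfl⟩ := h
  exact ⟨a, l, r, b ++ s, hR, by simp, by simp⟩

theorem MStep.reflTransGen_append_right {w₁ w₂ : List G}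
    (h : ReflTransGen (MStep R) w₁ w₂) (s : List G) :
    ReflTransGen (MStep R) (w₁ ++ s) (w₂ ++ s) :=
  h.lift (· ++ s) fun _ _ hstep => hstep.append_right s

theorem IsNormalForm.of_append_right {w s : List G} (h : IsNormalForm (MStep R) (w ++ s)) :
    IsNormalForm (MStep R) w :=
  fun _ hw => h _ (hw.append_right s)

theorem PStep.reflTransGen_of_mStep {w₁ w₂ : List G} (h : ReflTransGen (MStep R) w₁ w₂) (x : X) :
    ReflTransGen (PStep R act) (w₁, x) (w₂, x) :=
  h.lift (·, x) fun _ _ hstep => Or.inl ⟨hstep, rfl⟩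

theorem PStep.prepend {p q : List G × X} (h : PStep R act p q) (v : List G) :
    PStep R act (v ++ p.1, p.2) (v ++ q.1, q.2) := by
  rcases h with ⟨⟨a, l, r, b, hR, h₁, h₂⟩, he⟩ | ⟨w, g, y, h₁, hy, h₂, h₃⟩
  · exact Or.inl ⟨⟨v ++ a, l, r, b, hR, by simp [h₁], by simp [h₂]⟩, he⟩
  · exact Or.inr ⟨v ++ w, g, y, by simp [h₁], hy, by simp [h₂], h₃⟩

theorem PStep.reflTransGen_prepend {p q : List G × X} (h : ReflTransGen (PStep R act) p q)
    (v : List G) : ReflTransGen (PStep R act) (v ++ p.1, p.2) (v ++ q.1, q.2) :=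
  h.lift (fun p => (v ++ p.1, p.2)) fun _ _ hstep => hstep.prepend v

theorem PStep.exists_mStep_of_reflTransGen {q : List G × X} {v : List G} {x : X}
    (h : ReflTransGen (PStep R act) q (v, x)) :
    ∃ p, ReflTransGen (MStep R) q.1 (v ++ p) ∧ ReflTransGen (PStep R act) (p, q.2) ([], x) := by
  induction h using ReflTransGen.head_induction_on with
  | refl => exact ⟨[], by rw [List.append_nil], .refl⟩
  | head hstep _ ih =>
    obtain ⟨p, hp₁, hp₂⟩ := ih
    rcases hstep with ⟨hm, he⟩ | ⟨w, g, y, hw, hy, h₁, h₂⟩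
    · exact ⟨p, .head hm hp₁, he ▸ hp₂⟩
    · refine ⟨p ++ [g], by simpa [hw, h₁] using MStep.reflTransGen_append_right hp₁ [g], ?_⟩
      exact .head (Or.inr ⟨p, g, y, rfl, hy, rfl, rfl⟩) (h₂ ▸ hp₂)

theorem PStep.reflTransGen_iff_exists_mStep {w v : List G} {x' x : X} :
    ReflTransGen (PStep R act) (w, x') (v, x) ↔
      ∃ p, ReflTransGen (MStep R) w (v ++ p) ∧ ReflTransGen (PStep R act) (p, x') ([], x) := by
  refine ⟨PStep.exists_mStep_of_reflTransGen, fun ⟨p, hp₁, hp₂⟩ => ?_⟩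
  simpa using (PStep.reflTransGen_of_mStep hp₁ x').trans (PStep.reflTransGen_prepend hp₂ v)

end Rewriting

section NormalForms

variable {G X : Type*} {R : List G → List G → Prop} {act : G → X → Option X}

theorem isNormalForm_nil (hwf : WellFounded (flip (MStep R))) (x : X) :
    IsNormalForm (PStep R act) ([], x) := by
  rintro q (⟨⟨a, l, r, b, hR, hnil, -⟩, -⟩ | ⟨w, g, y, hnil, -⟩)
  · obtain ⟨rfl, rfl, rfl⟩ : a = [] ∧ l = [] ∧ b = [] := by simpa using hnil.symm
    -- a rule with empty left-hand side could be applied to any word forever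
    obtain ⟨m, -, hm⟩ := hwf.exists_isNormalForm ([] : List G)
    exact hm (r ++ m) ⟨[], [], r, m, hR, rfl, by simp⟩
  · simp at hnil

theorem PStep.exists_isNormalForm_of_isNormalForm_mStep (hwf : WellFounded (flip (MStep R)))
    {u : List G} (hu : IsNormalForm (MStep R) u) (x : X) :
    ∃ q, ReflTransGen (PStep R act) (u, x) q ∧ IsNormalForm (PStep R act) q := by
  induction u using List.reverseRecOn generalizing x with
  | nil => exact ⟨([], x), .refl, isNormalForm_nil hwf x⟩
  | append_singleton w g ih =>
    cases hy : act g x with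
    | some y =>
      obtain ⟨q, hq, hqn⟩ := ih hu.of_append_right y
      exact ⟨q, .head (Or.inr ⟨w, g, y, rfl, hy, rfl, rfl⟩) hq, hqn⟩
    | none =>
      refine ⟨(w ++ [g], x), .refl, ?_⟩
      rintro q (⟨hm, -⟩ | ⟨w', g', y, hw, hy', -, -⟩)
      · exact hu _ hm
      · obtain ⟨-, rfl⟩ : w = w' ∧ g = g' := by simpa using hw
        simp [hy] at hy'

theorem PStep.exists_isNormalForm (hwf : WellFounded (flip (MStep R))) (q : List G × X) :
    ∃ q', ReflTransGen (PStep R act) q q' ∧ IsNormalForm (PStep R act) q' := by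
  obtain ⟨u, hqu, hu⟩ := hwf.exists_isNormalForm q.1
  obtain ⟨q', hq', hq'n⟩ := PStep.exists_isNormalForm_of_isNormalForm_mStep (act := act) hwf hu q.2
  exact ⟨q', (PStep.reflTransGen_of_mStep hqu q.2).trans hq', hq'n⟩

end NormalForms

namespace PGlob

variable {G X : Type*} {R : List G → List G → Prop} {act : G → X → Option X}

theorem mk_eq_mk_iff_of_isNormalForm
    (hconf : ∀ p q₁ q₂ : List G × X, ReflTransGen (PStep R act) p q₁ →
      ReflTransGen (PStep R act) p q₂ → Join (ReflTransGen (PStep R act)) q₁ q₂)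
    {a b : List G × X} (hb : IsNormalForm (PStep R act) b) :
    mk R act a = mk R act b ↔ ReflTransGen (PStep R act) a b := by
  refine Quot.eq.trans <| (EqvGen.is_equivalence _).eqvGen_iff.trans <|
    (join_reflTransGen_iff_eqvGen hconf).symm.trans ⟨?_, fun h => ⟨b, h, .refl⟩⟩
  rintro ⟨c, hac, hbc⟩
  exact hb.eq_of_reflTransGen hbc ▸ hac

theorem mk_eq_mk_of_mStep {w u : List G} (h : ReflTransGen (MStep R) w u) (x : X) :
    mk R act (w, x) = mk R act (u, x) :=
  Quot.sound (EqvGen.reflTransGen_le_eqvGen _ _ _ (PStep.reflTransGen_of_mStep h x))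

variable [TopologicalSpace X]

theorem continuous_mk (w : List G) : Continuous fun x : X => mk R act (w, x) :=
  continuous_iff_coinduced_le.2 <|
    le_iSup (fun w => TopologicalSpace.coinduced (fun x : X => mk R act (w, x)) ‹_›) w

theorem isClosed_iff {s : Set (PGlob R act)} :
    IsClosed s ↔ ∀ w : List G, IsClosed ((fun x : X => mk R act (w, x)) ⁻¹' s) :=
  isClosed_iSup_iff.trans <| forall_congr' fun _ => isClosed_coinduced

end PGlob

theorem isClosed_setOf_reflTransGen_of_isNormalForm {G X : Type*} [TopologicalSpace X]
    {R : List G → List G → Prop} {act : G → X → Option X}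
    (hcl : ∀ (w : List G) (x : X), IsClosed {x' : X | ReflTransGen (PStep R act) (w, x') ([], x)})
    {u : List G} (hu : IsNormalForm (MStep R) u) (v : List G) (x : X) :
    IsClosed {x' : X | ReflTransGen (PStep R act) (u, x') (v, x)} := by
  simp_rw [PStep.reflTransGen_iff_exists_mStep (w := u) (v := v)]
  by_cases hvu : ∃ p, u = v ++ p
  · obtain ⟨p, rfl⟩ := hvu
    convert hcl p x using 1
    ext x'
    refine ⟨fun ⟨p', hp', hx'⟩ => ?_, fun hx' => ⟨p, .refl, hx'⟩⟩
    rwa [← List.append_cancel_left (hu.eq_of_reflTransGen hp')]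
  · convert isClosed_empty
    refine Set.eq_empty_of_forall_notMem fun x' ⟨p, hp, _⟩ => hvu ⟨p, ?_⟩
    exact (hu.eq_of_reflTransGen hp).symm

theorem stmt_12_general {G X : Type*} [TopologicalSpace X]
    (R : List G → List G → Prop) (act : G → X → Option X)
    (hnoeth : WellFounded (fun w₁ w₂ : List G => MStep R w₂ w₁))
    (hconfP : ∀ p q₁ q₂ : List G × X, Relation.ReflTransGen (PStep R act) p q₁ →
      Relation.ReflTransGen (PStep R act) p q₂ →
      ∃ t, Relation.ReflTransGen (PStep R act) q₁ t ∧
        Relation.ReflTransGen (PStep R act) q₂ t) :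
    T1Space (PGlob R act) ↔
      ∀ (w : List G) (x : X),
        IsClosed {x' : X | Relation.ReflTransGen (PStep R act) (w, x') ([], x)} := by
  constructor
  · intro _ w x
    have hpre : {x' | ReflTransGen (PStep R act) (w, x') ([], x)} =
        (fun x' => PGlob.mk R act (w, x')) ⁻¹' {PGlob.mk R act ([], x)} :=
      Set.ext fun _ => (PGlob.mk_eq_mk_iff_of_isNormalForm hconfP (isNormalForm_nil hnoeth x)).symm
    rw [hpre]
    exact isClosed_singleton.preimage (PGlob.continuous_mk w)
  · refine fun hcl => ⟨fun a => ?_⟩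
    obtain ⟨q, rfl⟩ : ∃ q, PGlob.mk R act q = a := Quot.exists_rep a
    obtain ⟨⟨v, x⟩, hq, hvx⟩ := PStep.exists_isNormalForm hnoeth q
    rw [(PGlob.mk_eq_mk_iff_of_isNormalForm hconfP hvx).2 hq, PGlob.isClosed_iff]
    intro w
    obtain ⟨u, hwu, hu⟩ := hnoeth.exists_isNormalForm w
    have hpre : (fun x' => PGlob.mk R act (w, x')) ⁻¹' {PGlob.mk R act (v, x)} =
        {x' | ReflTransGen (PStep R act) (u, x') (v, x)} :=
      Set.ext fun x' => by
        rw [Set.mem_preimage, Set.mem_singleton_iff, PGlob.mk_eq_mk_of_mStep hwu x']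
        exact PGlob.mk_eq_mk_iff_of_isNormalForm hconfP hvx
    rw [hpre]
    exact isClosed_setOf_reflTransGen_of_isNormalForm hcl hu v x

/-- For a confluent continuous partial action of a monoid `M` on a T1 space
`X`, the topological globalization `Y` is T1 iff `u⁻¹[{x}]` is closed in `X`
for every `u ∈ M` (represented by a word `w`) and every `x ∈ X`; here
`u⁻¹[{x}] = {x' | u·x' is defined and equal to x}`, definedness being
reduction of `(w, x')` to a point of `X`. -/
theorem stmt_12 {G X : Type*} [TopologicalSpace X] [T1Space X]
    (R : List G → List G → Prop) (act : G → X → Option X)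
    (hnoeth : WellFounded (fun w₁ w₂ : List G => MStep R w₂ w₁))
    (hconfM : ∀ w s₁ s₂ : List G, Relation.ReflTransGen (MStep R) w s₁ →
      Relation.ReflTransGen (MStep R) w s₂ →
      ∃ t, Relation.ReflTransGen (MStep R) s₁ t ∧ Relation.ReflTransGen (MStep R) s₂ t)
    (hnosingle : ∀ (g : G) (r : List G), ¬ R [g] r)
    (hconfP : ∀ p q₁ q₂ : List G × X, Relation.ReflTransGen (PStep R act) p q₁ →
      Relation.ReflTransGen (PStep R act) p q₂ →
      ∃ t, Relation.ReflTransGen (PStep R act) q₁ t ∧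
        Relation.ReflTransGen (PStep R act) q₂ t)
    (hcont : ∀ g : G, ContinuousOn (fun x => (act g x).getD x) {x | (act g x).isSome}) :
    T1Space (PGlob R act) ↔
      ∀ (w : List G) (x : X),
        IsClosed {x' : X | Relation.ReflTransGen (PStep R act) (w, x') ([], x)} :=
  stmt_12_general R act hnoeth hconfP
end
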